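/- Let A and B be nonnegative tensors of order m and dimension n, and for t ∈ [0,1] define the Hadamard-type interpolation G(t) with entries G(t)_{i_1...i_m} = A_{i_1...i_m}^{1−t} B_{i_1...i_m}^{t} (with the convention 0^s = 0 for s ∈ [0,1], and 0^0 = 0 when both entries are zero if either is zero). Suppose A and B are irreducible with positive Perron eigenvectors x, y: A x^{m-1} = ρ(A) x^{[m-1]}, B y^{m-1} = ρ(B) y^{[m-1]}, x, y > 0. Then for the vector z with z_i = x_i^{1−t} y_i^{t}, componentwise G(t) z^{m-1} ≤ ρ(A)^{1−t} ρ(B)^{t} z^{[m-1]}. -/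

import Mathlib

open Finset

/-- An `(m+1)`-order, `n`-dimensional real tensor. -/
abbrev Tensor (m n : ℕ) := (Fin (m + 1) → Fin n) → ℝ

/-- `(A x^{m-1})_i` over ℂ. -/
noncomputable def tApplyC {m n : ℕ} (T : Tensor m n) (x : Fin n → ℂ) (i : Fin n) : ℂ :=
  ∑ j : Fin m → Fin n, (T (Fin.cons i j) : ℂ) * ∏ k, x (j k)

/-- `(A x^{m-1})_i` over ℝ. -/
noncomputable def tApply {m n : ℕ} (T : Tensor m n) (x : Fin n → ℝ) (i : Fin n) : ℝ :=
  ∑ j : Fin m → Fin n, T (Fin.cons i j) * ∏ k, x (j k)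

/-- eigenvalue of a tensor -/
def IsEig {m n : ℕ} (T : Tensor m n) (lam : ℂ) : Prop :=
  ∃ x : Fin n → ℂ, x ≠ 0 ∧ ∀ i, tApplyC T x i = lam * (x i) ^ m

/-- spectral radius -/
noncomputable def specRad {m n : ℕ} (T : Tensor m n) : ℝ :=
  sSup {r : ℝ | ∃ lam : ℂ, IsEig T lam ∧ ‖lam‖ = r}

/-- the unit tensor -/
def unitT (m n : ℕ) : Tensor m n := fun idx => if ∀ k, idx k = idx 0 then 1 else 0

def TNonneg {m n : ℕ} (T : Tensor m n) : Prop := ∀ idx, 0 ≤ T idx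

def TEssNonneg {m n : ℕ} (T : Tensor m n) : Prop :=
  ∀ idx, (¬ ∀ k, idx k = idx 0) → 0 ≤ T idx

def TDiagonal {m n : ℕ} (T : Tensor m n) : Prop :=
  ∀ idx, (¬ ∀ k, idx k = idx 0) → T idx = 0

def TReducible {m n : ℕ} (T : Tensor m n) : Prop :=
  ∃ S : Finset (Fin n), S.Nonempty ∧ S ≠ Finset.univ ∧
    ∀ i ∈ S, ∀ j : Fin m → Fin n, (∀ k, j k ∉ S) → T (Fin.cons i j) = 0

def TIrreducible {m n : ℕ} (T : Tensor m n) : Prop := ¬ TReducible T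

def TSymmetric {m n : ℕ} (T : Tensor m n) : Prop :=
  ∀ (σ : Equiv.Perm (Fin (m + 1))) (idx : Fin (m + 1) → Fin n), T (idx ∘ σ) = T idx

/-- shift making a tensor nonnegative -/
noncomputable def shiftAlpha {m n : ℕ} (T : Tensor m n) : ℝ :=
  (∑ i : Fin n, |T (fun _ => i)|) + 1

/-- dominant eigenvalue of an essentially nonnegative tensor -/
noncomputable def domEig {m n : ℕ} (T : Tensor m n) : ℝ :=
  specRad (fun idx => T idx + shiftAlpha T * unitT m n idx) - shiftAlpha T

/-- homogeneous form `T x^m` -/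
noncomputable def tForm {m n : ℕ} (T : Tensor m n) (x : Fin n → ℝ) : ℝ :=
  ∑ idx : Fin (m + 1) → Fin n, T idx * ∏ k, x (idx k)

/-! Each coordinate of `G(t) z^{m-1}` is a sum of terms `a_j^{1-t} b_j^t`, where `a_j` and `b_j`
are the corresponding terms of `A x^{m-1}` and `B y^{m-1}`. Hölder's inequality with exponents
`1/(1-t)` and `1/t` bounds it by `(A x^{m-1})_i^{1-t} (B y^{m-1})_i^t`, and the eigen-equations turn
this into `ρ(A)^{1-t} ρ(B)^t z_i^{m-1}`. -/

theorem Real.sum_rpow_one_sub_mul_rpow_le {ι : Type*} (s : Finset ι) {f g : ι → ℝ}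
    (hf : ∀ i ∈ s, 0 ≤ f i) (hg : ∀ i ∈ s, 0 ≤ g i) {t : ℝ} (ht₀ : 0 ≤ t) (ht₁ : t ≤ 1) :
    ∑ i ∈ s, f i ^ (1 - t) * g i ^ t ≤ (∑ i ∈ s, f i) ^ (1 - t) * (∑ i ∈ s, g i) ^ t := by
  rcases ht₀.eq_or_lt with rfl | ht₀
  · simp
  rcases ht₁.eq_or_lt with rfl | ht₁
  · simp
  have hpq : Real.HolderConjugate (1 / (1 - t)) (1 / t) :=
    ⟨by simp, by simpa using ht₁, by simpa using ht₀⟩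
  have hcancel : ∀ {u : ℝ}, 0 < u → ∀ {a : ℝ}, 0 ≤ a → (a ^ u) ^ (1 / u) = a :=
    fun hu _ ha => by rw [← Real.rpow_mul ha, mul_one_div_cancel hu.ne', Real.rpow_one]
  have h := Real.inner_le_Lp_mul_Lq_of_nonneg s hpq
    (fun i hi => Real.rpow_nonneg (hf i hi) (1 - t)) (fun i hi => Real.rpow_nonneg (hg i hi) t)
  simp only [one_div_one_div] at h
  rwa [sum_congr rfl fun i hi => hcancel (sub_pos.2 ht₁) (hf i hi),
    sum_congr rfl fun i hi => hcancel ht₀ (hg i hi)] at h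

theorem Real.finsetProd_rpow_mul_rpow {ι : Type*} (s : Finset ι) {f g : ι → ℝ}
    (hf : ∀ i ∈ s, 0 ≤ f i) (hg : ∀ i ∈ s, 0 ≤ g i) (p q : ℝ) :
    ∏ i ∈ s, f i ^ p * g i ^ q = (∏ i ∈ s, f i) ^ p * (∏ i ∈ s, g i) ^ q := by
  rw [prod_mul_distrib, Real.finsetProd_rpow s f hf, Real.finsetProd_rpow s g hg]

theorem tApply_nonneg {m n : ℕ} {T : Tensor m n} (hT : TNonneg T) {x : Fin n → ℝ}
    (hx : ∀ i, 0 ≤ x i) (i : Fin n) : 0 ≤ tApply T x i :=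
  sum_nonneg fun _ _ => mul_nonneg (hT _) (prod_nonneg fun _ _ => hx _)

theorem tApply_interpolate_le {m n : ℕ} {A B : Tensor m n} (hA : TNonneg A) (hB : TNonneg B)
    {x y : Fin n → ℝ} (hx : ∀ i, 0 ≤ x i) (hy : ∀ i, 0 ≤ y i) {t : ℝ} (ht₀ : 0 ≤ t)
    (ht₁ : t ≤ 1) (i : Fin n) :
    tApply (fun idx => A idx ^ (1 - t) * B idx ^ t) (fun k => x k ^ (1 - t) * y k ^ t) i ≤
      tApply A x i ^ (1 - t) * tApply B y i ^ t := by
  have hterm : ∀ j : Fin m → Fin n,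
      (A (Fin.cons i j) ^ (1 - t) * B (Fin.cons i j) ^ t) * ∏ k, (x (j k) ^ (1 - t) * y (j k) ^ t)
        = (A (Fin.cons i j) * ∏ k, x (j k)) ^ (1 - t) * (B (Fin.cons i j) * ∏ k, y (j k)) ^ t := by
    intro j
    rw [Real.finsetProd_rpow_mul_rpow _ (fun k _ => hx _) (fun k _ => hy _),
      Real.mul_rpow (hA _) (prod_nonneg fun k _ => hx _),
      Real.mul_rpow (hB _) (prod_nonneg fun k _ => hy _)]
    ring
  unfold tApply
  rw [sum_congr rfl fun j _ => hterm j]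
  exact Real.sum_rpow_one_sub_mul_rpow_le _
    (fun j _ => mul_nonneg (hA _) (prod_nonneg fun k _ => hx _))
    (fun j _ => mul_nonneg (hB _) (prod_nonneg fun k _ => hy _)) ht₀ ht₁

theorem Real.mul_pow_rpow {c a : ℝ} (hc : 0 ≤ c) (ha : 0 ≤ a) (m : ℕ) (s : ℝ) :
    (c * a ^ m) ^ s = c ^ s * (a ^ s) ^ m := by
  rw [Real.mul_rpow hc (pow_nonneg ha m), Real.rpow_pow_comm ha]

theorem stmt14_general {m n : ℕ} (A B : Tensor m n)
    (hA : TNonneg A) (hB : TNonneg B)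
    (x y : Fin n → ℝ) (hx : ∀ i, 0 < x i) (hy : ∀ i, 0 < y i)
    (hAx : ∀ i, tApply A x i = specRad A * (x i) ^ m)
    (hBy : ∀ i, tApply B y i = specRad B * (y i) ^ m)
    (t : ℝ) (ht : t ∈ Set.Icc (0 : ℝ) 1)
    (G : Tensor m n) (hG : ∀ idx, G idx = A idx ^ (1 - t) * B idx ^ t)
    (z : Fin n → ℝ) (hz : ∀ i, z i = x i ^ (1 - t) * y i ^ t) :
    ∀ i, tApply G z i ≤ specRad A ^ (1 - t) * specRad B ^ t * (z i) ^ m := by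
  intro i
  obtain rfl : G = fun idx => A idx ^ (1 - t) * B idx ^ t := funext hG
  obtain rfl : z = fun k => x k ^ (1 - t) * y k ^ t := funext hz
  have hρA : 0 ≤ specRad A := nonneg_of_mul_nonneg_left
    ((hAx i).symm ▸ tApply_nonneg hA (fun k => (hx k).le) i) (pow_pos (hx i) m)
  have hρB : 0 ≤ specRad B := nonneg_of_mul_nonneg_left
    ((hBy i).symm ▸ tApply_nonneg hB (fun k => (hy k).le) i) (pow_pos (hy i) m)
  calc _ ≤ tApply A x i ^ (1 - t) * tApply B y i ^ t :=
        tApply_interpolate_le hA hB (fun k => (hx k).le) (fun k => (hy k).le) ht.1 ht.2 i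
    _ = _ := by
        rw [hAx, hBy, Real.mul_pow_rpow hρA (hx i).le, Real.mul_pow_rpow hρB (hy i).le]
        ring

/-- Hölder step of Kingman's theorem for tensors. -/
theorem stmt14 {m n : ℕ} (A B : Tensor m n)
    (hA : TNonneg A) (hB : TNonneg B)
    (hirrA : TIrreducible A) (hirrB : TIrreducible B)
    (x y : Fin n → ℝ) (hx : ∀ i, 0 < x i) (hy : ∀ i, 0 < y i)
    (hAx : ∀ i, tApply A x i = specRad A * (x i) ^ m)
    (hBy : ∀ i, tApply B y i = specRad B * (y i) ^ m)
    (t : ℝ) (ht : t ∈ Set.Icc (0 : ℝ) 1)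
    (G : Tensor m n) (hG : ∀ idx, G idx = A idx ^ (1 - t) * B idx ^ t)
    (z : Fin n → ℝ) (hz : ∀ i, z i = x i ^ (1 - t) * y i ^ t) :
    ∀ i, tApply G z i ≤ specRad A ^ (1 - t) * specRad B ^ t * (z i) ^ m :=
  stmt14_general A B hA hB x y hx hy hAx hBy t ht G hG z hz
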